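/- arXiv:1509.08547 — 2 statements merged into one kernel-verified Lean document; each statement's English description precedes it below -/
import Mathlib

section
/- Let K be a coronoid and let C_a, C_b be two distinct connected components of its complement. Then for any hexagons a ∈ C_a and b ∈ C_b, the hexagons a and b are connected by a path of adjacent hexagons all lying in K ∪ C_a ∪ C_b. -/
/-- Hexagons of the infinite hexagonal grid, indexed by integer pairs. -/
abbrev Hexa := ℤ × ℤ

/-- Two hexagons of the grid are adjacent (share an edge). -/
def HexAdj (a b : Hexa) : Prop :=
  (b.1 - a.1, b.2 - a.2) ∈
    ({(1,0), (-1,0), (0,1), (1,1), (0,-1), (-1,-1)} : Set (ℤ × ℤ))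

/-- `a` and `b` are joined by a path of pairwise-adjacent hexagons all lying in `K`. -/
def ReachIn (K : Set Hexa) (a b : Hexa) : Prop :=
  a ∈ K ∧ b ∈ K ∧
    Relation.ReflTransGen (fun x y => HexAdj x y ∧ x ∈ K ∧ y ∈ K) a b

/-- A hexagonal system is connected if any two of its hexagons are joined inside it. -/
def IsConnectedSys (K : Set Hexa) : Prop := ∀ a ∈ K, ∀ b ∈ K, ReachIn K a b

/-- `C` is a connected component of the hexagonal system `K`. -/
def IsComponent (K C : Set Hexa) : Prop := ∃ a ∈ K, C = {b | ReachIn K a b}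

/-- A coronoid is a finite connected (nonempty) hexagonal system. -/
def IsCoronoid (K : Set Hexa) : Prop := K.Finite ∧ K.Nonempty ∧ IsConnectedSys K

/-- A benzenoid is a coronoid whose complement is connected. -/
def IsBenzenoid (K : Set Hexa) : Prop := IsCoronoid K ∧ IsConnectedSys Kᶜ

/-!
Every component `C` of the complement of a nonempty `K` touches `K`: walk through the grid
from `a ∈ C` to some hexagon of `K`; the hexagon just before the walk first enters `K` is
reached from `a` inside `Kᶜ`, hence lies in `C`. Going from `a` to such a hexagon of `Ca`,
across `K` (which is connected) and back out into `Cb` to `b` gives the path.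
-/

lemma HexAdj.symm {a b : Hexa} (h : HexAdj a b) : HexAdj b a := by
  simp only [HexAdj, Set.mem_insert_iff, Set.mem_singleton_iff, Prod.mk.injEq] at h ⊢
  omega

instance : Std.Symm HexAdj := ⟨fun _ _ => HexAdj.symm⟩

lemma hexAdj_add_one_zero (x : Hexa) : HexAdj x (x + (1, 0)) := by
  simp [HexAdj]

lemma hexAdj_add_zero_one (x : Hexa) : HexAdj x (x + (0, 1)) := by
  simp [HexAdj]

lemma Relation.ReflTransGen.add_zsmul {G : Type*} [AddGroup G] {r : G → G → Prop}
    [Std.Symm r] {v : G} (hv : ∀ x, r x (x + v)) (x : G) (n : ℤ) :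
    Relation.ReflTransGen r x (x + n • v) := by
  induction n using Int.induction_on with
  | zero => rw [zero_smul, add_zero]
  | succ n ih =>
    rw [add_one_zsmul, ← add_assoc]
    exact ih.tail (hv _)
  | pred n ih =>
    have h := hv (x + (-(n : ℤ) - 1) • v)
    rw [add_assoc, ← add_one_zsmul, sub_add_cancel] at h
    exact ih.tail (Std.Symm.symm _ _ h)

lemma reflTransGen_hexAdj (a b : Hexa) : Relation.ReflTransGen HexAdj a b := by
  have hb : b = a + (b.1 - a.1) • ((1, 0) : Hexa) + (b.2 - a.2) • ((0, 1) : Hexa) := by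
    ext <;> simp
  rw [hb]
  exact (Relation.ReflTransGen.add_zsmul hexAdj_add_one_zero a _).trans
    (Relation.ReflTransGen.add_zsmul hexAdj_add_zero_one _ _)

namespace ReachIn

variable {S T : Set Hexa} {a b c : Hexa}

lemma single (h : HexAdj a b) (ha : a ∈ S) (hb : b ∈ S) : ReachIn S a b :=
  ⟨ha, hb, .single ⟨h, ha, hb⟩⟩

lemma trans (h₁ : ReachIn S a b) (h₂ : ReachIn S b c) : ReachIn S a c :=
  ⟨h₁.1, h₂.2.1, h₁.2.2.trans h₂.2.2⟩

lemma symm (h : ReachIn S a b) : ReachIn S b a := by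
  have : Std.Symm fun x y => HexAdj x y ∧ x ∈ S ∧ y ∈ S :=
    ⟨fun _ _ ⟨hxy, hx, hy⟩ => ⟨hxy.symm, hy, hx⟩⟩
  exact ⟨h.2.1, h.1, Std.Symm.symm _ _ h.2.2⟩

lemma mono (hST : S ⊆ T) (h : ReachIn S a b) : ReachIn T a b :=
  ⟨hST h.1, hST h.2.1,
    Relation.ReflTransGen.mono (fun _ _ ⟨hxy, hx, hy⟩ => ⟨hxy, hST hx, hST hy⟩) _ _ h.2.2⟩

end ReachIn

lemma exists_reachIn_compl_hexAdj {K : Set Hexa} (hK : K.Nonempty) {a : Hexa} (ha : a ∉ K) :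
    ∃ c k, ReachIn Kᶜ a c ∧ HexAdj c k ∧ k ∈ K := by
  obtain ⟨k₀, hk₀⟩ := hK
  suffices ∀ z, Relation.ReflTransGen HexAdj a z →
      ReachIn Kᶜ a z ∨ ∃ c k, ReachIn Kᶜ a c ∧ HexAdj c k ∧ k ∈ K by
    simpa [ReachIn, hk₀] using this k₀ (reflTransGen_hexAdj a k₀)
  intro z hz
  induction hz with
  | refl => exact .inl ⟨ha, ha, .refl⟩
  | @tail m z _ hmz ih =>
    rcases ih with ham | hexit
    · by_cases hz : z ∈ K
      · exact .inr ⟨m, z, ham, hmz, hz⟩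
      · exact .inl (ham.trans (.single hmz ham.2.1 hz))
    · exact .inr hexit

namespace IsComponent

variable {T C : Set Hexa} {a c : Hexa}

lemma subset (hC : IsComponent T C) : C ⊆ T := by
  obtain ⟨_, _, rfl⟩ := hC
  exact fun _ h => h.2.1

lemma reachIn (hC : IsComponent T C) (ha : a ∈ C) (h : ReachIn T a c) : ReachIn C a c := by
  obtain ⟨a₀, _, rfl⟩ := hC
  obtain ⟨-, -, hpath⟩ := h
  induction hpath with
  | refl => exact ⟨ha, ha, .refl⟩
  | @tail m z _ hmz ih =>
    have hz : z ∈ {b | ReachIn T a₀ b} := ih.2.1.trans (.single hmz.1 hmz.2.1 hmz.2.2)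
    exact ih.trans (.single hmz.1 ih.2.1 hz)

lemma exists_reachIn_hexAdj {K : Set Hexa} (hC : IsComponent Kᶜ C) (hK : K.Nonempty)
    (ha : a ∈ C) : ∃ c k, ReachIn C a c ∧ HexAdj c k ∧ k ∈ K := by
  obtain ⟨c, k, hac, hck, hk⟩ := exists_reachIn_compl_hexAdj hK (hC.subset ha)
  exact ⟨c, k, hC.reachIn ha hac, hck, hk⟩

end IsComponent

theorem stmt5_general (K : Set Hexa) (hK : IsCoronoid K) (Ca Cb : Set Hexa)
    (hCa : IsComponent Kᶜ Ca) (hCb : IsComponent Kᶜ Cb)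
    (a : Hexa) (ha : a ∈ Ca) (b : Hexa) (hb : b ∈ Cb) :
    ReachIn (K ∪ Ca ∪ Cb) a b := by
  obtain ⟨-, hKne, hKconn⟩ := hK
  obtain ⟨c, k, hac, hck, hk⟩ := hCa.exists_reachIn_hexAdj hKne ha
  obtain ⟨c', k', hbc', hck', hk'⟩ := hCb.exists_reachIn_hexAdj hKne hb
  have hKS : K ⊆ K ∪ Ca ∪ Cb := fun _ h => .inl (.inl h)
  have hCaS : Ca ⊆ K ∪ Ca ∪ Cb := fun _ h => .inl (.inr h)
  have hCbS : Cb ⊆ K ∪ Ca ∪ Cb := fun _ h => .inr h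
  exact (hac.mono hCaS).trans <| (ReachIn.single hck (hCaS hac.2.1) (hKS hk)).trans <|
    ((hKconn k hk k' hk').mono hKS).trans <|
    (ReachIn.single hck'.symm (hKS hk') (hCbS hbc'.2.1)).trans (hbc'.symm.mono hCbS)

/-- hexagons of two distinct components `Ca`, `Cb` of the complement of a
coronoid `K` are joined by a path of adjacent hexagons inside `K ∪ Ca ∪ Cb`. -/
theorem stmt5 (K : Set Hexa) (hK : IsCoronoid K) (Ca Cb : Set Hexa)
    (hCa : IsComponent Kᶜ Ca) (hCb : IsComponent Kᶜ Cb) (hne : Ca ≠ Cb)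
    (a : Hexa) (ha : a ∈ Ca) (b : Hexa) (hb : b ∈ Cb) :
    ReachIn (K ∪ Ca ∪ Cb) a b :=
  stmt5_general K hK Ca Cb hCa hCb a ha b hb
end

section
/- Let G be a graph with K Kekulé structures (perfect matchings) and let G' = A^n(G) be an iterated generalised altan with iteration vector n = (n_1, ..., n_k). Then the number of perfect matchings of G' is K' = 2^{|n|} · K where |n| = n_1 + ... + n_k; moreover no spoke edge belongs to any perfect matching of G', and if n_i > 0 then every edge on the i-th new perimeter cycle belongs to exactly K'/2 perfect matchings. -/
/-- A graph together with, for each perimeter cycle, the cyclically ordered list of its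
degree-2 vertices (the "roots" where spokes will be attached), and bookkeeping of the
spoke edges and the current perimeter (new-cycle) edges produced so far. -/
structure AltState where
  V : Type
  G : SimpleGraph V
  roots : List (List V)
  spokes : Set (Sym2 V)
  perimEdges : List (Set (Sym2 V))

/-- The altan of `G` with respect to the cyclically ordered degree-2 root list `r`:
add a new cycle on `2 * r.length` vertices (modelled by `ZMod (2 * r.length)`) and join
every second new vertex (the even ones) to the corresponding root by a spoke. -/
def altanG {V : Type} (G : SimpleGraph V) (r : List V) :
    SimpleGraph (V ⊕ ZMod (2 * r.length)) :=
  SimpleGraph.fromRel (fun x y =>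
    match x, y with
    | Sum.inl a, Sum.inl b => G.Adj a b
    | Sum.inl a, Sum.inr z =>
        ∃ j : Fin r.length, r.get j = a ∧ z = ((2 * (j : ℕ) : ℕ) : ZMod (2 * r.length))
    | Sum.inr z, Sum.inr w => w = z + 1
    | _, _ => False)

/-- Perform the altan operation at the `i`-th perimeter. The new perimeter at index `i`
consists of the odd new vertices; spoke and perimeter-edge bookkeeping is updated. -/
def altanAt (S : AltState) (i : ℕ) : AltState :=
  let r := S.roots.getD i []
  { V := S.V ⊕ ZMod (2 * r.length)
    G := altanG S.G r
    roots := (S.roots.map (List.map Sum.inl)).set i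
      ((List.range r.length).map
        (fun j => Sum.inr ((2 * j + 1 : ℕ) : ZMod (2 * r.length))))
    spokes := (Sym2.map Sum.inl '' S.spokes) ∪
      {e | ∃ j : Fin r.length,
        e = s(Sum.inl (r.get j),
              (Sum.inr ((2 * (j : ℕ) : ℕ) : ZMod (2 * r.length)) :
                S.V ⊕ ZMod (2 * r.length)))}
    perimEdges := (S.perimEdges.map (Set.image (Sym2.map Sum.inl))).set i
      {e | ∃ z : ZMod (2 * r.length),
        e = s((Sum.inr z : S.V ⊕ ZMod (2 * r.length)), Sum.inr (z + 1))} }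

/-- Apply the altan operation `m` times at perimeter `i`. -/
def applyTimes (S : AltState) (i : ℕ) : ℕ → AltState
  | 0 => S
  | m + 1 => altanAt (applyTimes S i m) i

/-- The iterated generalised altan `A^n`: apply the altan operation `n i` times at the
`i`-th perimeter, for each `i`. -/
def iterAltan (S : AltState) (n : List ℕ) : AltState :=
  (List.range n.length).foldl (fun T i => applyTimes T i (n.getD i 0)) S

/-- The number of Kekulé structures (perfect matchings) of a graph. -/
noncomputable def numPM {V : Type} (G : SimpleGraph V) : ℕ :=
  {M : G.Subgraph | M.IsPerfectMatching}.ncard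

/-!
The vertices of colour `1` on a new perimeter (those without spokes) can only be matched
along the perimeter, i.e. to vertices of colour `0`; there are equally many of each colour, so
in any perfect matching of an altan every perimeter vertex is matched along the perimeter and
no spoke is used. The perimeter then carries one of its two alternating perfect matchings,
independently of the matching of the old graph, which gives
`PM(A(G)) ≃ PM(G) × ZMod 2`. Each altan step thus doubles the number of perfect
matchings, halves the share of the new perimeter edges, and preserves the share of old edges.
-/

open SimpleGraph Sum

section Parity

variable {d : ℕ}

/-- The colour of a vertex of the new perimeter `ZMod (2 * d)`; spokes sit on colour `0`. -/
abbrev perimParity (d : ℕ) : ZMod (2 * d) →+* ZMod 2 :=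
  ZMod.castHom (dvd_mul_right 2 d) (ZMod 2)

lemma perimParity_add_one (z : ZMod (2 * d)) :
    perimParity d (z + 1) = perimParity d z + 1 := by
  simp

lemma perimParity_sub_one (z : ZMod (2 * d)) :
    perimParity d (z - 1) = perimParity d z + 1 := by
  rw [map_sub, map_one]
  generalize perimParity d z = x
  fin_cases x <;> rfl

lemma perimParity_natCast_two_mul (j : ℕ) :
    perimParity d ((2 * j : ℕ) : ZMod (2 * d)) = 0 := by
  rw [map_natCast, Nat.cast_mul, ZMod.natCast_self, zero_mul]

lemma ZMod.eq_zero_or_eq_one_of_two (x : ZMod 2) : x = 0 ∨ x = 1 := by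
  revert x
  decide

lemma ZMod.add_one_eq_iff_ne (x b : ZMod 2) : x + 1 = b ↔ x ≠ b := by
  revert x b
  decide

lemma ZMod.two_ne_zero_of_two_le (hd : 2 ≤ d) : (2 : ZMod (2 * d)) ≠ 0 := by
  intro h
  have := Nat.le_of_dvd two_pos ((ZMod.natCast_eq_zero_iff 2 (2 * d)).mp (by exact_mod_cast h))
  omega

end Parity

section AltanGraph

variable {W : Type} {H : SimpleGraph W} {r : List W}

lemma altanG_adj_inl_inl {a c : W} : (altanG H r).Adj (inl a) (inl c) ↔ H.Adj a c := by
  simp only [altanG, fromRel_adj, ne_eq, inl.injEq]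
  exact ⟨fun ⟨_, h⟩ => h.elim id H.adj_symm, fun h => ⟨h.ne, Or.inl h⟩⟩

lemma altanG_adj_inl_inr {a : W} {z : ZMod (2 * r.length)} :
    (altanG H r).Adj (inl a) (inr z) ↔
      ∃ j : Fin r.length, r.get j = a ∧ z = ((2 * (j : ℕ) : ℕ) : ZMod (2 * r.length)) := by
  simp [altanG]

lemma altanG_adj_inr_inr {z w : ZMod (2 * r.length)} :
    (altanG H r).Adj (inr z) (inr w) ↔ z ≠ w ∧ (w = z + 1 ∨ z = w + 1) := by
  simp [altanG]

lemma perimParity_eq_zero_of_altanG_adj {a : W} {z : ZMod (2 * r.length)}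
    (h : (altanG H r).Adj (inl a) (inr z)) : perimParity _ z = 0 := by
  obtain ⟨j, -, rfl⟩ := altanG_adj_inl_inr.mp h
  exact perimParity_natCast_two_mul j

end AltanGraph

section AltanMatching

variable {W : Type} {H : SimpleGraph W} {r : List W}

def altanMatching (H : SimpleGraph W) (r : List W) (N : H.Subgraph) (b : ZMod 2) :
    (altanG H r).Subgraph where
  verts := Set.univ
  Adj x y := match x, y with
    | inl a, inl c => N.Adj a c
    | inr z, inr w =>
        (w = z + 1 ∧ perimParity _ z = b) ∨ (z = w + 1 ∧ perimParity _ w = b)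
    | _, _ => False
  adj_sub {x y} h := by
    match x, y, h with
    | inl _, inl _, h => exact altanG_adj_inl_inl.mpr (N.adj_sub h)
    | inr z, inr w, h =>
      refine altanG_adj_inr_inr.mpr ⟨?_, h.imp And.left And.left⟩
      rintro rfl
      have hz : z + 1 = z := by rcases h with ⟨h, -⟩ | ⟨h, -⟩ <;> exact h.symm
      exact absurd (congrArg (perimParity _) (add_eq_left.mp hz)) (by simp)
  edge_vert _ := Set.mem_univ _
  symm := ⟨fun x y h => match x, y, h with
    | inl _, inl _, h => N.adj_symm h
    | inr _, inr _, h => h.symm⟩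

variable {N : H.Subgraph} {b : ZMod 2}

@[simp]
lemma altanMatching_adj_inl_inl {a c : W} :
    (altanMatching H r N b).Adj (inl a) (inl c) ↔ N.Adj a c := Iff.rfl

lemma altanMatching_adj_inr_inr {z w : ZMod (2 * r.length)} :
    (altanMatching H r N b).Adj (inr z) (inr w) ↔
      (w = z + 1 ∧ perimParity _ z = b) ∨ (z = w + 1 ∧ perimParity _ w = b) := Iff.rfl

lemma altanMatching_adj_inr_add_one (hr : 2 ≤ r.length) {z : ZMod (2 * r.length)} :
    (altanMatching H r N b).Adj (inr z) (inr (z + 1)) ↔ perimParity _ z = b := by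
  rw [altanMatching_adj_inr_inr]
  refine ⟨fun h => h.elim And.right fun ⟨h, _⟩ => ?_, fun h => Or.inl ⟨rfl, h⟩⟩
  exact absurd (by linear_combination -h) (ZMod.two_ne_zero_of_two_le hr)

lemma altanMatching_isPerfectMatching (hN : N.IsPerfectMatching) :
    (altanMatching H r N b).IsPerfectMatching := by
  rw [Subgraph.isPerfectMatching_iff] at hN ⊢
  rintro (a | z)
  · obtain ⟨c, hc, hu⟩ := hN a
    refine ⟨inl c, hc, ?_⟩
    rintro (c' | w) h
    · exact congrArg inl (hu c' h)
    · exact h.elim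
  · by_cases hz : perimParity _ z = b
    · refine ⟨inr (z + 1), Or.inl ⟨rfl, hz⟩, ?_⟩
      rintro (a | w) (⟨rfl, -⟩ | ⟨rfl, hw⟩)
      · rfl
      · exact absurd hw ((ZMod.add_one_eq_iff_ne _ _).mp (by rwa [← perimParity_add_one]))
    · refine ⟨inr (z - 1), Or.inr ⟨(sub_add_cancel z 1).symm, ?_⟩, ?_⟩
      · rw [perimParity_sub_one, ZMod.add_one_eq_iff_ne]; exact hz
      · rintro (a | w) (⟨rfl, hw⟩ | ⟨rfl, -⟩)
        · exact absurd hw hz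
        · rw [add_sub_cancel_right]

end AltanMatching

section AltanPerfectMatchings

variable {W : Type} {H : SimpleGraph W} {r : List W} {M : (altanG H r).Subgraph}

lemma adj_inr_of_perimParity_eq_one {z : ZMod (2 * r.length)} (hz : perimParity _ z = 1)
    {x : W ⊕ ZMod (2 * r.length)} (h : M.Adj (inr z) x) :
    x = inr (z + 1) ∨ x = inr (z - 1) := by
  match x, M.adj_sub h with
  | inl _, hadj => exact absurd (perimParity_eq_zero_of_altanG_adj hadj.symm) (by simp [hz])
  | inr w, hadj =>
    obtain ⟨-, rfl | rfl⟩ := altanG_adj_inr_inr.mp hadj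
    · exact Or.inl rfl
    · exact Or.inr (by rw [add_sub_cancel_right])

open Classical in
noncomputable def oddMate (M : (altanG H r).Subgraph) (z : ZMod (2 * r.length)) :
    ZMod (2 * r.length) :=
  if M.Adj (inr z) (inr (z + 1)) then z + 1 else z - 1

lemma adj_oddMate (hM : M.IsPerfectMatching) {z : ZMod (2 * r.length)}
    (hz : perimParity _ z = 1) : M.Adj (inr z) (inr (oddMate M z)) := by
  obtain ⟨x, hx, -⟩ := Subgraph.isPerfectMatching_iff.mp hM (inr z)
  unfold oddMate
  split_ifs with h
  · exact h
  · rcases adj_inr_of_perimParity_eq_one hz hx with rfl | rfl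
    · exact absurd hx h
    · exact hx

lemma perimParity_oddMate {z : ZMod (2 * r.length)} (hz : perimParity _ z = 1) :
    perimParity _ (oddMate M z) = 0 := by
  unfold oddMate
  split_ifs <;> simp only [perimParity_add_one, perimParity_sub_one, hz] <;> rfl

/-- Pigeonhole: `oddMate` maps the `r.length` perimeter vertices of colour `1` injectively
into the `r.length` of colour `0`, so every vertex of colour `0` is matched along the
perimeter. -/
lemma exists_adj_inr_of_perimParity_eq_zero (hr : 2 ≤ r.length) (hM : M.IsPerfectMatching)
    {w : ZMod (2 * r.length)} (hw : perimParity _ w = 0) : ∃ z, M.Adj (inr z) (inr w) := by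
  have : NeZero (2 * r.length) := ⟨by omega⟩
  let f : {z // perimParity r.length z = 1} → {w // perimParity r.length w = 0} :=
    fun z => ⟨oddMate M z, perimParity_oddMate z.2⟩
  have hf : Function.Injective f := fun z₁ z₂ h =>
    Subtype.ext <| inr_injective <| hM.1.eq_of_adj_right (adj_oddMate hM z₁.2)
      ((congrArg (fun w => inr w.1) h).symm ▸ adj_oddMate hM z₂.2)
  let e : {z // perimParity r.length z = 1} ≃ {w // perimParity r.length w = 0} :=
    (Equiv.addRight 1).subtypeEquiv fun z => by
      rw [Equiv.coe_addRight, perimParity_add_one, ZMod.add_one_eq_iff_ne]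
      rcases ZMod.eq_zero_or_eq_one_of_two (perimParity _ z) with h | h <;> simp [h]
  obtain ⟨z, hz⟩ := hf.surjective_of_finite e ⟨w, hw⟩
  have hzw : oddMate M z = w := congrArg Subtype.val hz
  exact ⟨z, hzw ▸ adj_oddMate hM z.2⟩

lemma adj_inr_add_one_or_adj_inr_sub_one (hr : 2 ≤ r.length) (hM : M.IsPerfectMatching)
    (z : ZMod (2 * r.length)) : M.Adj (inr z) (inr (z + 1)) ∨ M.Adj (inr z) (inr (z - 1)) := by
  rcases ZMod.eq_zero_or_eq_one_of_two (perimParity _ z) with hz | hz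
  · obtain ⟨w, hw⟩ := exists_adj_inr_of_perimParity_eq_zero hr hM hz
    rcases (altanG_adj_inr_inr.mp (M.adj_sub hw)).2 with rfl | rfl
    · exact Or.inr (by rw [add_sub_cancel_right]; exact hw.symm)
    · exact Or.inl hw.symm
  · obtain ⟨x, hx, -⟩ := Subgraph.isPerfectMatching_iff.mp hM (inr z)
    rcases adj_inr_of_perimParity_eq_one hz hx with rfl | rfl
    exacts [Or.inl hx, Or.inr hx]

lemma not_adj_inr_inl (hr : 2 ≤ r.length) (hM : M.IsPerfectMatching) (z : ZMod (2 * r.length))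
    (a : W) : ¬ M.Adj (inr z) (inl a) := fun h =>
  (adj_inr_add_one_or_adj_inr_sub_one hr hM z).elim
    (fun h' => inl_ne_inr (hM.1.eq_of_adj_left h h'))
    (fun h' => inl_ne_inr (hM.1.eq_of_adj_left h h'))

lemma adj_inr_add_one_iff_not_adj_inr_sub_one (hr : 2 ≤ r.length) (hM : M.IsPerfectMatching)
    (z : ZMod (2 * r.length)) :
    M.Adj (inr z) (inr (z + 1)) ↔ ¬ M.Adj (inr z) (inr (z - 1)) := by
  refine ⟨fun h₁ h₂ => ZMod.two_ne_zero_of_two_le hr ?_,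
    (adj_inr_add_one_or_adj_inr_sub_one hr hM z).resolve_right⟩
  linear_combination inr_injective (hM.1.eq_of_adj_left h₁ h₂)

open Classical in
noncomputable def perimBit (M : (altanG H r).Subgraph) : ZMod 2 :=
  if M.Adj (inr 0) (inr 1) then 0 else 1

lemma adj_inr_add_one_iff (hr : 2 ≤ r.length) (hM : M.IsPerfectMatching)
    (z : ZMod (2 * r.length)) : M.Adj (inr z) (inr (z + 1)) ↔ perimParity _ z = perimBit M := by
  have : NeZero (2 * r.length) := ⟨by omega⟩
  rw [← ZMod.natCast_zmod_val z]
  induction z.val with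
  | zero =>
    unfold perimBit
    split_ifs with h <;> simp [h]
  | succ k ih =>
    rw [Nat.cast_succ, adj_inr_add_one_iff_not_adj_inr_sub_one hr hM, add_sub_cancel_right]
    rw [M.adj_comm, perimParity_add_one, ZMod.add_one_eq_iff_ne]
    exact not_congr ih

end AltanPerfectMatchings

lemma numPM_eq_natCard {V : Type} (G : SimpleGraph V) :
    numPM G = Nat.card {M : G.Subgraph // M.IsPerfectMatching} := rfl

section AltanCount

variable {W : Type} {H : SimpleGraph W} {r : List W}

def altanRestrict (M : (altanG H r).Subgraph) : H.Subgraph where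
  verts := Set.univ
  Adj a c := M.Adj (inl a) (inl c)
  adj_sub h := altanG_adj_inl_inl.mp (M.adj_sub h)
  edge_vert _ := Set.mem_univ _
  symm := ⟨fun _ _ h => h.symm⟩

lemma map_inl_mem_edgeSet_iff {M : (altanG H r).Subgraph} {e : Sym2 W} :
    e.map inl ∈ M.edgeSet ↔ e ∈ (altanRestrict M).edgeSet := by
  induction e using Sym2.ind
  rfl

lemma altanRestrict_isPerfectMatching (hr : 2 ≤ r.length) {M : (altanG H r).Subgraph}
    (hM : M.IsPerfectMatching) : (altanRestrict M).IsPerfectMatching := by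
  rw [Subgraph.isPerfectMatching_iff]
  intro a
  obtain ⟨x, hx, hu⟩ := Subgraph.isPerfectMatching_iff.mp hM (inl a)
  match x, hx with
  | inl c, hx => exact ⟨c, hx, fun c' h => inl_injective (hu _ h)⟩
  | inr z, hx => exact absurd hx.symm (not_adj_inr_inl hr hM z a)

lemma altanRestrict_altanMatching {N : H.Subgraph} (hN : N.IsPerfectMatching) (b : ZMod 2) :
    altanRestrict (altanMatching H r N b) = N := by
  ext
  · simp [altanRestrict, hN.2 _]
  · rfl

lemma perimBit_altanMatching (hr : 2 ≤ r.length) (N : H.Subgraph) (b : ZMod 2) :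
    perimBit (altanMatching H r N b) = b := by
  have h := altanMatching_adj_inr_add_one hr (N := N) (b := b) (z := 0)
  rw [zero_add, map_zero] at h
  unfold perimBit
  split_ifs with h₀
  · exact h.mp h₀
  · exact (ZMod.add_one_eq_iff_ne 0 b).mpr (mt h.mpr h₀)

lemma altanMatching_altanRestrict (hr : 2 ≤ r.length) {M : (altanG H r).Subgraph}
    (hM : M.IsPerfectMatching) : altanMatching H r (altanRestrict M) (perimBit M) = M := by
  ext x y
  · simp [altanMatching, hM.2 x]
  · match x, y with
    | inl _, inl _ => rfl
    | inl a, inr z => exact iff_of_false id fun h => not_adj_inr_inl hr hM z a h.symm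
    | inr z, inl a => exact iff_of_false id (not_adj_inr_inl hr hM z a)
    | inr z, inr w =>
      rw [altanMatching_adj_inr_inr]
      constructor
      · rintro (⟨rfl, h⟩ | ⟨rfl, h⟩)
        · exact (adj_inr_add_one_iff hr hM z).mpr h
        · exact ((adj_inr_add_one_iff hr hM w).mpr h).symm
      · intro h
        rcases (altanG_adj_inr_inr.mp (M.adj_sub h)).2 with rfl | rfl
        · exact Or.inl ⟨rfl, (adj_inr_add_one_iff hr hM z).mp h⟩
        · exact Or.inr ⟨rfl, (adj_inr_add_one_iff hr hM w).mp h.symm⟩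

noncomputable def altanPerfectMatchingEquiv (hr : 2 ≤ r.length) :
    {N : H.Subgraph // N.IsPerfectMatching} × ZMod 2 ≃
      {M : (altanG H r).Subgraph // M.IsPerfectMatching} where
  toFun p := ⟨altanMatching H r p.1 p.2, altanMatching_isPerfectMatching p.1.2⟩
  invFun M := (⟨altanRestrict M.1, altanRestrict_isPerfectMatching hr M.2⟩, perimBit M.1)
  left_inv p := Prod.ext (Subtype.ext (altanRestrict_altanMatching p.1.2 p.2))
    (perimBit_altanMatching hr p.1.1 p.2)
  right_inv M := Subtype.ext (altanMatching_altanRestrict hr M.2)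

lemma ncard_altan_isPerfectMatching_and (hr : 2 ≤ r.length) (P : (altanG H r).Subgraph → Prop) :
    {M | M.IsPerfectMatching ∧ P M}.ncard =
      Nat.card {p : {N : H.Subgraph // N.IsPerfectMatching} × ZMod 2 //
        P (altanMatching H r p.1 p.2)} := by
  rw [← Nat.card_coe_set_eq]
  exact Nat.card_congr ((Equiv.subtypeSubtypeEquivSubtypeInter _ P).symm.trans
    ((altanPerfectMatchingEquiv hr).subtypeEquiv (p := fun p => P (altanMatching H r p.1 p.2))
      (q := fun M => P M.1) fun _ => by rfl).symm)

lemma numPM_altanG (hr : 2 ≤ r.length) : numPM (altanG H r) = 2 * numPM H := by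
  rw [numPM_eq_natCard, numPM_eq_natCard, ← Nat.card_congr (altanPerfectMatchingEquiv hr),
    Nat.card_prod, Nat.card_zmod, Nat.mul_comm]

lemma ncard_altan_isPerfectMatching_map_inl_mem (hr : 2 ≤ r.length) (e : Sym2 W) :
    {M : (altanG H r).Subgraph | M.IsPerfectMatching ∧ e.map inl ∈ M.edgeSet}.ncard =
      2 * {N : H.Subgraph | N.IsPerfectMatching ∧ e ∈ N.edgeSet}.ncard := by
  have he (N : H.Subgraph) (b : ZMod 2) :
      e.map inl ∈ (altanMatching H r N b).edgeSet ↔ e ∈ N.edgeSet := by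
    induction e using Sym2.ind
    simp
  rw [ncard_altan_isPerfectMatching_and hr, ← Nat.card_coe_set_eq]
  calc _ = Nat.card ({N : H.Subgraph // N.IsPerfectMatching ∧ e ∈ N.edgeSet} × ZMod 2) :=
        Nat.card_congr (((Equiv.refl _).subtypeEquiv fun p => he p.1 p.2).trans
          (Equiv.prodSubtypeFstEquivSubtypeProd.trans
            ((Equiv.subtypeSubtypeEquivSubtypeInter _ _).prodCongr (Equiv.refl _))))
    _ = _ := by rw [Nat.card_prod, Nat.card_zmod]; exact Nat.mul_comm _ _

lemma ncard_altan_isPerfectMatching_perim_mem (hr : 2 ≤ r.length) (z : ZMod (2 * r.length)) :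
    {M : (altanG H r).Subgraph |
      M.IsPerfectMatching ∧ s(inr z, inr (z + 1)) ∈ M.edgeSet}.ncard = numPM H := by
  simp only [ncard_altan_isPerfectMatching_and hr, Subgraph.mem_edgeSet,
    altanMatching_adj_inr_add_one hr]
  exact Nat.card_congr
    ((Equiv.subtypeProdEquivSigmaSubtype fun _ b => perimParity r.length z = b).trans
      (Equiv.sigmaUnique _ _))

end AltanCount

lemma List.getD_set {α : Type*} {l : List α} {i j : ℕ} {a d : α} :
    (l.set i a).getD j d = if i = j ∧ j < l.length then a else l.getD j d := by
  simp only [List.getD_eq_getElem?_getD, List.getElem?_set]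
  split_ifs <;> simp_all

lemma List.getD_map_image {α β : Type*} (l : List (Set α)) (f : α → β) (j : ℕ) :
    (l.map (Set.image f)).getD j ∅ = f '' l.getD j ∅ := by
  rw [← Set.image_empty f, List.getD_map]

section Iteration

/-- What holds after `c` altan steps applied to a base graph `G₀` with `L` perimeters. -/
structure AltanInvariant {V₀ : Type} (G₀ : SimpleGraph V₀) (L c : ℕ) (U : AltState) :
    Prop where
  roots_length : U.roots.length = L
  two_le_length_roots : ∀ i < L, 2 ≤ (U.roots.getD i []).length
  numPM_eq : numPM U.G = 2 ^ c * numPM G₀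
  spoke_not_mem : ∀ M : U.G.Subgraph, M.IsPerfectMatching → ∀ e ∈ U.spokes, e ∉ M.edgeSet
  ncard_perim_mem : ∀ i, ∀ e ∈ U.perimEdges.getD i ∅,
    {M : U.G.Subgraph | M.IsPerfectMatching ∧ e ∈ M.edgeSet}.ncard * 2 = numPM U.G

variable {V₀ : Type} {G₀ : SimpleGraph V₀} {L c : ℕ} {U : AltState}

lemma altanInvariant_init (G : SimpleGraph V₀) (roots : List (List V₀))
    (hroots : ∀ i (hi : i < roots.length), 2 ≤ roots[i].length) :
    AltanInvariant G roots.length 0 ⟨V₀, G, roots, ∅, roots.map fun _ => ∅⟩ where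
  roots_length := rfl
  two_le_length_roots i hi := by simpa only [List.getD_eq_getElem _ _ hi] using hroots i hi
  numPM_eq := by simp
  spoke_not_mem _ _ _ he := he.elim
  ncard_perim_mem i e he := by simp [List.getD_eq_getElem?_getD] at he

lemma AltanInvariant.altanAt_succ (h : AltanInvariant G₀ L c U) {i : ℕ} (hi : i < L) :
    AltanInvariant G₀ L (c + 1) (altanAt U i) := by
  have hr := h.two_le_length_roots i hi
  refine ⟨(List.length_set ..).trans ((List.length_map ..).trans h.roots_length),
    fun j hj => ?_, ?_, ?_, ?_⟩
  · show 2 ≤ (((U.roots.map (List.map inl)).set i _).getD j []).length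
    rw [List.getD_set]
    split_ifs with hij
    · simpa using hr
    · rw [← List.map_nil (f := inl), List.getD_map, List.length_map]
      exact h.two_le_length_roots j hj
  · show numPM (altanG U.G _) = _
    rw [numPM_altanG hr, h.numPM_eq, pow_succ]
    ring
  · rintro M hM e (⟨e, he, rfl⟩ | ⟨j, rfl⟩) hMe
    · exact h.spoke_not_mem _ (altanRestrict_isPerfectMatching hr hM) e he
        (map_inl_mem_edgeSet_iff.mp hMe)
    · exact not_adj_inr_inl hr hM _ _ (Subgraph.mem_edgeSet.mp hMe).symm
  · intro j (e : Sym2 (U.V ⊕ ZMod (2 * (U.roots.getD i []).length))) he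
    show {M : (altanG U.G _).Subgraph | M.IsPerfectMatching ∧ e ∈ M.edgeSet}.ncard * 2 =
      numPM (altanG U.G _)
    rw [numPM_altanG hr]
    change e ∈ ((U.perimEdges.map (Set.image (Sym2.map inl))).set i _).getD j ∅ at he
    rw [List.getD_set] at he
    split_ifs at he
    · obtain ⟨z, rfl⟩ := he
      rw [ncard_altan_isPerfectMatching_perim_mem hr, Nat.mul_comm]
    · rw [List.getD_map_image] at he
      obtain ⟨e, he, rfl⟩ := he
      rw [ncard_altan_isPerfectMatching_map_inl_mem hr, mul_assoc, h.ncard_perim_mem j e he]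

lemma AltanInvariant.applyTimes_add (h : AltanInvariant G₀ L c U) {i : ℕ} (hi : i < L)
    (m : ℕ) :
    AltanInvariant G₀ L (c + m) (applyTimes U i m) := by
  induction m with
  | zero => exact h
  | succ m ih => exact ih.altanAt_succ hi

lemma AltanInvariant.foldl_applyTimes_add (h : AltanInvariant G₀ L c U) (f : ℕ → ℕ)
    {l : List ℕ} (hl : ∀ i ∈ l, i < L) :
    AltanInvariant G₀ L (c + (l.map f).sum) (l.foldl (fun T i => applyTimes T i (f i)) U) := by
  induction l generalizing c U with
  | nil => exact h
  | cons i l ih =>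
    rw [List.map_cons, List.sum_cons, ← add_assoc]
    exact ih (h.applyTimes_add (hl i List.mem_cons_self) (f i)) fun j hj => hl j (.tail i hj)

end Iteration

lemma List.map_getD_range_length (n : List ℕ) : (List.range n.length).map (n.getD · 0) = n :=
  List.ext_getElem (by simp) fun k _ hk => by simp [List.getElem?_eq_getElem hk]

theorem stmt19_general (V : Type) [Fintype V]
    (G : SimpleGraph V) [DecidableRel G.Adj]
    (roots : List (List V)) (n : List ℕ) (hlen : n.length = roots.length)
    -- admissibility: each `roots i` is the cyclic list of degree-2 vertices of a cycle
    -- `C i` of `G`, containing at least two of them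
    (hadm : ∀ i (hi : i < roots.length),
      2 ≤ (roots.get ⟨i, hi⟩).length ∧
      (roots.get ⟨i, hi⟩).Nodup ∧
      (∀ v ∈ roots.get ⟨i, hi⟩, G.degree v = 2) ∧
      ∃ (v : V) (c : G.Walk v v), c.IsCycle ∧
        (roots.get ⟨i, hi⟩).IsRotated
          (c.support.tail.filter (fun u => decide (G.degree u = 2)))) :
    let S : AltState := ⟨V, G, roots, ∅, roots.map fun _ => (∅ : Set (Sym2 V))⟩
    let T : AltState := iterAltan S n
    numPM T.G = 2 ^ n.sum * numPM G ∧
    (∀ M : T.G.Subgraph, M.IsPerfectMatching → ∀ e ∈ T.spokes, e ∉ M.edgeSet) ∧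
    (∀ i, i < n.length → 0 < n.getD i 0 → ∀ e ∈ T.perimEdges.getD i ∅,
      {M : T.G.Subgraph | M.IsPerfectMatching ∧ e ∈ M.edgeSet}.ncard * 2
        = numPM T.G) := by
  intro S T
  have hT := (altanInvariant_init G roots fun i hi => (hadm i hi).1).foldl_applyTimes_add
    (n.getD · 0) fun i hi => hlen ▸ List.mem_range.mp hi
  rw [List.map_getD_range_length, zero_add] at hT
  exact ⟨hT.numPM_eq, hT.spoke_not_mem, fun i _ _ => hT.ncard_perim_mem i⟩

/-- if `G` has `K` perfect matchings then the iterated generalised altan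
`A^n(G)` has `2^|n| * K` perfect matchings; no spoke lies in any perfect matching; and if
`n i > 0` then each edge of the `i`-th new perimeter lies in exactly half of them. -/
theorem stmt19 (V : Type) [Fintype V] [DecidableEq V]
    (G : SimpleGraph V) [DecidableRel G.Adj]
    (roots : List (List V)) (n : List ℕ) (hlen : n.length = roots.length)
    -- admissibility: each `roots i` is the cyclic list of degree-2 vertices of a cycle
    -- `C i` of `G`, containing at least two of them
    (hadm : ∀ i (hi : i < roots.length),
      2 ≤ (roots.get ⟨i, hi⟩).length ∧
      (roots.get ⟨i, hi⟩).Nodup ∧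
      (∀ v ∈ roots.get ⟨i, hi⟩, G.degree v = 2) ∧
      ∃ (v : V) (c : G.Walk v v), c.IsCycle ∧
        (roots.get ⟨i, hi⟩).IsRotated
          (c.support.tail.filter (fun u => decide (G.degree u = 2))))
    -- each degree-2 vertex of `G` lies on at most one of the cycles
    (hdisj : ∀ i j (hi : i < roots.length) (hj : j < roots.length), i ≠ j →
      ∀ v ∈ roots.get ⟨i, hi⟩, v ∉ roots.get ⟨j, hj⟩) :
    let S : AltState := ⟨V, G, roots, ∅, roots.map fun _ => (∅ : Set (Sym2 V))⟩
    let T : AltState := iterAltan S n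
    numPM T.G = 2 ^ n.sum * numPM G ∧
    (∀ M : T.G.Subgraph, M.IsPerfectMatching → ∀ e ∈ T.spokes, e ∉ M.edgeSet) ∧
    (∀ i, i < n.length → 0 < n.getD i 0 → ∀ e ∈ T.perimEdges.getD i ∅,
      {M : T.G.Subgraph | M.IsPerfectMatching ∧ e ∈ M.edgeSet}.ncard * 2
        = numPM T.G) :=
  stmt19_general V G roots n hlen hadm
end
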